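/- arXiv:1409.0496 — 2 statements merged into one kernel-verified Lean document; each statement's English description precedes it below -/
import Mathlib

section
/- Let φ be a polynomially bounded numbering with degree p, and for k ≥ 0 let d(k) = p^{k−1} + p^{k−2} + … + p + 1 = Σ_{i<k} p^i. Then there exists a positive integer a such that for every sufficiently large n, the interval I_n = {2^{a·d(n)}+1, …, 2^{a·d(n+1)}} satisfies |M_φ ∩ I_n| > 2^{−a·p^n} · |I_n|. -/
/-- A numbering: a family of partial functions `φ_e : ℕ →. ℕ` such that the
two-variable map `(e, x) ↦ φ_e x` is partial recursive. -/
def PartrecNumbering (φ : ℕ → ℕ →. ℕ) : Prop := Partrec₂ φ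

/-- `φ` is acceptable: every numbering translates into it via a computable function. -/
def Acceptable (φ : ℕ → ℕ →. ℕ) : Prop :=
  ∀ ψ : ℕ → ℕ →. ℕ, PartrecNumbering ψ → ∃ f : ℕ → ℕ, Computable f ∧ ∀ e, φ (f e) = ψ e

/-- `φ` has the Kolmogorov property: every numbering translates into it with
linearly bounded (not necessarily computable) translation. -/
def KolmogorovProperty (φ : ℕ → ℕ →. ℕ) : Prop :=
  ∀ ψ : ℕ → ℕ →. ℕ, PartrecNumbering ψ → ∃ c : ℕ, ∀ e, ∃ j, j ≤ c * e + c ∧ φ j = ψ e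

/-- `φ` is computably bounded: every numbering translates into it with a
computable bound on the translated index. -/
def ComputablyBounded (φ : ℕ → ℕ →. ℕ) : Prop :=
  ∀ ψ : ℕ → ℕ →. ℕ, PartrecNumbering ψ → ∃ f : ℕ → ℕ, Computable f ∧ ∀ e, ∃ j, j ≤ f e ∧ φ j = ψ e

/-- `φ` is polynomially bounded with degree `p`. -/
def PolyBounded (φ : ℕ → ℕ →. ℕ) (p : ℕ) : Prop :=
  ∀ ψ : ℕ → ℕ →. ℕ, PartrecNumbering ψ → ∃ c : ℕ, ∀ e, ∃ j, j ≤ c * e ^ p + c ∧ φ j = ψ e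

/-- The set of `φ`-minimal indices. -/
def MINset (φ : ℕ → ℕ →. ℕ) : Set ℕ := {e | ∀ j < e, φ j ≠ φ e}

/-- Minimal indices of functions converging exactly on input 0. -/
def Mset (φ : ℕ → ℕ →. ℕ) : Set ℕ :=
  {e | e ∈ MINset φ ∧ (φ e 0).Dom ∧ ∀ x ≥ 1, ¬ (φ e x).Dom}

/-- `minIndex φ e` is the minimal index computing the same function as `e`. -/
noncomputable def minIndex (φ : ℕ → ℕ →. ℕ) (e : ℕ) : ℕ := sInf {j | φ j = φ e}

/-- A partial recursive `U` is optimal: every partial recursive `V` is simulated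
with only linear increase of programs. -/
def OptimalMachine (U : ℕ →. ℕ) : Prop :=
  Nat.Partrec U ∧ ∀ V : ℕ →. ℕ, Nat.Partrec V →
    ∃ c : ℕ, ∀ p, (V p).Dom → ∃ q, q ≤ c * p + c ∧ U q = V p

/-- Kolmogorov complexity of `x` with respect to `U`: the least binary length of
a `U`-program for `x`. (`Nat.size q` is the binary length of `q`.) -/
noncomputable def Cpx (U : ℕ →. ℕ) (x : ℕ) : ℕ :=
  sInf {n | ∃ q, U q = Part.some x ∧ Nat.size q = n}

/-- Kolmogorov complexity of (the canonical code of) a finite set. -/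
noncomputable def CpxFinset (U : ℕ →. ℕ) (A : Finset ℕ) : ℕ :=
  Cpx U (Encodable.encode A)

/-- `A` is `(m,k)`-recursive: a computable labelling of `k`-tuples that is
correct in at least `m` coordinates on every tuple. -/
def MKRecursive (m k : ℕ) (A : Set ℕ) : Prop :=
  ∃ f : (Fin k → ℕ) → Fin k → Bool, Computable f ∧
    ∀ x : Fin k → ℕ, m ≤ {i : Fin k | (f x i = true ↔ x i ∈ A)}.ncard


/-!
Let `ψ_e = onlyAtZero e` converge only on input `0`, with value `e`. Polynomial
boundedness places the least `φ`-index `m e` of `ψ_e` below `c e^p + c`, and `e ↦ m e` is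
injective with values in `M_φ`. With `L = 2^(a d(n))` and `a = p + c + 1`, the `2L + 1` indices
`m 0, …, m (2L)` all lie below `2^(a d(n+1)) = 2^a L^p`, and at least `L` of them exceed `L`, so
`I_n` contains at least `L` elements of `M_φ`, while `|I_n| < 2^(a p^n) L`.
-/

def onlyAtZero (e x : ℕ) : Part ℕ := if x = 0 then Part.some e else Part.none

lemma partrecNumbering_onlyAtZero : PartrecNumbering onlyAtZero := by
  have h : Primrec fun q : ℕ × ℕ => if q.2 = 0 then some q.1 else (none : Option ℕ) :=
    Primrec.ite (Primrec.eq.comp Primrec.snd (Primrec.const 0))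
      (Primrec.option_some.comp Primrec.fst) (Primrec.const none)
  refine (Computable.ofOption h.to_comp).of_eq fun q => ?_
  by_cases hq : q.2 = 0 <;> simp [onlyAtZero, hq]

lemma onlyAtZero_injective : Function.Injective onlyAtZero := by
  intro e₁ e₂ h
  simpa [onlyAtZero] using congrFun h 0

section

variable {φ : ℕ → ℕ →. ℕ} {g : ℕ →. ℕ}

lemma sInf_index_spec (h : ∃ j, φ j = g) : φ (sInf {j | φ j = g}) = g :=
  Nat.sInf_mem h

lemma sInf_index_mem_MINset (h : ∃ j, φ j = g) : sInf {j | φ j = g} ∈ MINset φ := by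
  intro k hk hkg
  rw [sInf_index_spec h] at hkg
  exact absurd (Nat.sInf_le hkg) (not_le.mpr hk)

lemma mem_Mset_of_eq_onlyAtZero {i e : ℕ} (hi : i ∈ MINset φ) (he : φ i = onlyAtZero e) :
    i ∈ Mset φ :=
  ⟨hi, by simp [he, onlyAtZero], fun x hx => by
    simp [he, onlyAtZero, Nat.one_le_iff_ne_zero.mp hx]⟩

lemma exists_injective_Mset_le_of_polyBounded {p : ℕ} (hpb : PolyBounded φ p) :
    ∃ c : ℕ, ∃ m : ℕ → ℕ, Function.Injective m ∧ ∀ e, m e ∈ Mset φ ∧ m e ≤ c * e ^ p + c := by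
  obtain ⟨c, hc⟩ := hpb onlyAtZero partrecNumbering_onlyAtZero
  choose j hj hje using hc
  have hex : ∀ e, ∃ k, φ k = onlyAtZero e := fun e => ⟨j e, hje e⟩
  refine ⟨c, fun e => sInf {k | φ k = onlyAtZero e}, fun e₁ e₂ h => ?_, fun e =>
    ⟨mem_Mset_of_eq_onlyAtZero (sInf_index_mem_MINset (hex e)) (sInf_index_spec (hex e)),
      (Nat.sInf_le (hje e)).trans (hj e)⟩⟩
  apply onlyAtZero_injective
  rw [← sInf_index_spec (hex e₁), ← sInf_index_spec (hex e₂)]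
  exact congrArg φ h

end

lemma le_ncard_inter_Icc_of_injective {S : Set ℕ} {m : ℕ → ℕ} (hm : Function.Injective m)
    {L R : ℕ} (hmS : ∀ e ≤ 2 * L, m e ∈ S ∧ m e ≤ R) :
    L ≤ (S ∩ Set.Icc (L + 1) R).ncard := by
  have hsub : m '' Set.Iic (2 * L) \ Set.Iic L ⊆ S ∩ Set.Icc (L + 1) R := by
    rintro _ ⟨⟨e, he, rfl⟩, hgt⟩
    exact ⟨(hmS e he).1, Nat.succ_le_of_lt (not_le.mp hgt), (hmS e he).2⟩
  calc L = (m '' Set.Iic (2 * L)).ncard - (Set.Iic L).ncard := by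
        rw [Set.ncard_image_of_injective _ hm]; simp; omega
    _ ≤ (m '' Set.Iic (2 * L) \ Set.Iic L).ncard := Set.le_ncard_sdiff _ _
    _ ≤ (S ∩ Set.Icc (L + 1) R).ncard :=
        Set.ncard_le_ncard hsub ((Set.finite_Icc _ _).inter_of_right _)

lemma mul_two_mul_pow_add_le (c p : ℕ) {x : ℕ} (hx : 1 ≤ x) :
    c * (2 * x) ^ p + c ≤ 2 ^ (p + c + 1) * x ^ p := by
  have hc : c ≤ 2 ^ c := Nat.lt_two_pow_self.le
  have hxp : 0 < 2 ^ p * x ^ p := Nat.mul_pos (Nat.two_pow_pos p) (Nat.one_le_pow _ _ hx)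
  calc c * (2 * x) ^ p + c ≤ c * 2 ^ p * x ^ p + c * 2 ^ p * x ^ p := by
        rw [mul_pow, ← mul_assoc, mul_assoc c]; gcongr; exact Nat.le_mul_of_pos_right _ hxp
    _ = 2 ^ (p + 1) * c * x ^ p := by ring
    _ ≤ 2 ^ (p + 1) * 2 ^ c * x ^ p := by gcongr
    _ = 2 ^ (p + c + 1) * x ^ p := by ring

lemma two_zpow_neg_mul_ncard_Icc_lt {L k : ℕ} (hL : 0 < L) :
    (2 : ℝ) ^ (-(k : ℤ)) * (Set.Icc (L + 1) (L * 2 ^ k)).ncard < L := by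
  have hLR : L ≤ L * 2 ^ k := Nat.le_mul_of_pos_right _ (by positivity)
  have hL' : (0 : ℝ) < L := by exact_mod_cast hL
  simp only [Nat.card_Icc, Set.ncard_eq_toFinset_card', Set.toFinset_Icc]
  rw [show L * 2 ^ k + 1 - (L + 1) = L * 2 ^ k - L by omega, Nat.cast_sub hLR, zpow_neg,
    zpow_natCast]
  push_cast
  rw [inv_mul_lt_iff₀ (by positivity)]
  nlinarith

theorem density_of_Mset_in_intervals_general
    (φ : ℕ → ℕ →. ℕ) (p : ℕ)
    (hpb : PolyBounded φ p) :
    ∃ a : ℕ, 0 < a ∧ ∃ N : ℕ, ∀ n ≥ N,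
      ((Mset φ ∩ Set.Icc (2 ^ (a * ∑ i ∈ Finset.range n, p ^ i) + 1)
          (2 ^ (a * ∑ i ∈ Finset.range (n + 1), p ^ i))).ncard : ℝ) >
        (2 : ℝ) ^ (-(a * p ^ n : ℤ)) *
          ((Set.Icc (2 ^ (a * ∑ i ∈ Finset.range n, p ^ i) + 1)
            (2 ^ (a * ∑ i ∈ Finset.range (n + 1), p ^ i)) : Set ℕ)).ncard := by
  obtain ⟨c, m, hm, hmM⟩ := exists_injective_Mset_le_of_polyBounded hpb
  refine ⟨p + c + 1, by omega, 0, fun n _ => ?_⟩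
  set a := p + c + 1
  set L := 2 ^ (a * ∑ i ∈ Finset.range n, p ^ i)
  have hR_succ : 2 ^ (a * ∑ i ∈ Finset.range (n + 1), p ^ i) = 2 ^ a * L ^ p := by
    rw [geom_sum_succ, mul_add, mul_one, pow_add, ← pow_mul]; ring_nf
  have hR_geom : 2 ^ (a * ∑ i ∈ Finset.range (n + 1), p ^ i) = L * 2 ^ (a * p ^ n) := by
    rw [geom_sum_succ', mul_add, pow_add, mul_comm]
  have hcount : L ≤ (Mset φ ∩ Set.Icc (L + 1) (2 ^ a * L ^ p)).ncard :=
    le_ncard_inter_Icc_of_injective hm fun e he => ⟨(hmM e).1, (hmM e).2.trans <|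
      (Nat.add_le_add_right (Nat.mul_le_mul_left _ (Nat.pow_le_pow_left he _)) _).trans <|
        mul_two_mul_pow_add_le c p Nat.one_le_two_pow⟩
  have hsmall := two_zpow_neg_mul_ncard_Icc_lt (k := a * p ^ n) (Nat.two_pow_pos _ : 0 < L)
  rw [hR_succ] at hR_geom ⊢
  rw [hR_geom] at hcount ⊢
  push_cast at hsmall ⊢
  exact hsmall.trans_le (by exact_mod_cast hcount)

/-- Density of elements of `M_φ` in the intervals
`I_n = {2^(a*d n)+1, ..., 2^(a*d (n+1))}`, where `d k = Σ_{i<k} p^i`. -/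
theorem density_of_Mset_in_intervals
    (φ : ℕ → ℕ →. ℕ) (hφ : PartrecNumbering φ) (p : ℕ) (hp : 0 < p)
    (hpb : PolyBounded φ p) :
    ∃ a : ℕ, 0 < a ∧ ∃ N : ℕ, ∀ n ≥ N,
      ((Mset φ ∩ Set.Icc (2 ^ (a * ∑ i ∈ Finset.range n, p ^ i) + 1)
          (2 ^ (a * ∑ i ∈ Finset.range (n + 1), p ^ i))).ncard : ℝ) >
        (2 : ℝ) ^ (-(a * p ^ n : ℤ)) *
          ((Set.Icc (2 ^ (a * ∑ i ∈ Finset.range n, p ^ i) + 1)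
            (2 ^ (a * ∑ i ∈ Finset.range (n + 1), p ^ i)) : Set ℕ)).ncard :=
  density_of_Mset_in_intervals_general φ p hpb
end

section
/- For every computably bounded numbering φ and every positive integer k, there is no computable function f mapping each e ∈ ℕ to a finite set f(e) ⊆ ℕ of cardinality at most k such that min_φ(e) ∈ f(e) for all e. -/
theorem minIndex_le_of_eq {φ : ℕ → ℕ →. ℕ} {e j : ℕ} (h : φ j = φ e) : minIndex φ e ≤ j :=
  Nat.sInf_le h

theorem minIndex_spec (φ : ℕ → ℕ →. ℕ) (e : ℕ) : φ (minIndex φ e) = φ e :=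
  Nat.sInf_mem (⟨e, rfl⟩ : {j | φ j = φ e}.Nonempty)

theorem minIndex_zero (φ : ℕ → ℕ →. ℕ) : minIndex φ 0 = 0 :=
  Nat.le_zero.1 (minIndex_le_of_eq rfl)

theorem minIndex_minIndex (φ : ℕ → ℕ →. ℕ) (e : ℕ) :
    minIndex φ (minIndex φ e) = minIndex φ e := by
  rw [minIndex, minIndex_spec φ e]
  rfl

theorem exists_lt_minIndex_of_lt_value (φ : ℕ → ℕ →. ℕ) (N : ℕ) :
    ∃ V, ∀ d v, v ∈ φ d 0 → V < v → N < minIndex φ d := by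
  have hfin : {v | ∃ t ≤ N, v ∈ φ t 0}.Finite := by
    have : {v | ∃ t ≤ N, v ∈ φ t 0} = ⋃ t ∈ Set.Iic N, {v | v ∈ φ t 0} := by ext; simp
    rw [this]
    exact (Set.finite_Iic N).biUnion fun t _ =>
      Set.Subsingleton.finite fun _ h₁ _ h₂ => Part.mem_unique h₁ h₂
  obtain ⟨V, hV⟩ := hfin.bddAbove
  refine ⟨V, fun d v hv hVv => ?_⟩
  by_contra! hle
  have : v ∈ φ (minIndex φ d) 0 := by rwa [minIndex_spec φ d]
  exact absurd (hV ⟨_, hle, this⟩) (not_le.2 hVv)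

section FinsetMem

open Denumerable

/- `Finset ℕ` is coded through the list of gaps between consecutive elements
(`Denumerable.raise'`), so membership is decided by a single fold over that list. -/
def raiseMemStep (x : ℕ) (p : ℕ × Bool) (m : ℕ) : ℕ × Bool :=
  (m + p.1 + 1, p.2 || decide (m + p.1 = x))

theorem foldl_raiseMemStep (x : ℕ) :
    ∀ (l : List ℕ) (n : ℕ) (b : Bool),
      (l.foldl (raiseMemStep x) (n, b)).2 = (b || decide (x ∈ raise' l n))
  | [], n, b => by simp [raise']
  | m :: l, n, b => by
    rw [List.foldl_cons, raiseMemStep, foldl_raiseMemStep x l]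
    simp only [raise', List.mem_cons, Bool.or_assoc, Bool.decide_or, eq_comm]

theorem mem_ofNat_finset_iff (n x : ℕ) :
    x ∈ ofNat (Finset ℕ) n ↔ x ∈ raise' (ofNat (List ℕ) n) 0 := by
  rw [show ofNat (Finset ℕ) n = (raise'Finset (ofNat (List ℕ) n) 0).map (eqv ℕ).symm.toEmbedding
    from ofNat_of_decode rfl]
  simp [raise'Finset, Denumerable.eqv, Finset.mem_def]

theorem primrecRel_mem_finset : PrimrecRel fun (x : ℕ) (s : Finset ℕ) => x ∈ s := by
  have hstep : Primrec₂ fun (x : ℕ) (q : (ℕ × Bool) × ℕ) => raiseMemStep x q.1 q.2 := by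
    have hsum : Primrec fun z : ℕ × (ℕ × Bool) × ℕ => z.2.2 + z.2.1.1 :=
      Primrec.nat_add.comp (Primrec.snd.comp Primrec.snd)
        (Primrec.fst.comp (Primrec.fst.comp Primrec.snd))
    exact Primrec.pair (Primrec.succ.comp hsum)
      (Primrec.or.comp (Primrec.snd.comp (Primrec.fst.comp Primrec.snd))
        (Primrec.eq.decide.comp hsum Primrec.fst))
  refine ⟨inferInstance, (Primrec.snd.comp (Primrec.list_foldl
      ((Primrec.ofNat (List ℕ)).comp (Primrec.encode.comp Primrec.snd))
      (Primrec.const (0, false)) (hstep.comp₂ (Primrec.fst.comp₂ Primrec₂.left)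
        Primrec₂.right))).of_eq fun p => ?_⟩
  rw [foldl_raiseMemStep, Bool.false_or]
  exact decide_eq_decide.2 ((mem_ofNat_finset_iff _ _).symm.trans (by rw [ofNat_encode]))

end FinsetMem

open Nat.Partrec (Code)
open Nat.Partrec.Code (eval evaln exists_code evaln_complete evaln_sound primrec_evaln eval_part
  fixed_point₂)

theorem Nat.find_mem_rfind {p : ℕ → Prop} [DecidablePred p] (h : ∃ n, p n) :
    Nat.find h ∈ Nat.rfind fun n => Part.some (decide (p n)) :=
  Nat.mem_rfind.2 ⟨by simpa using Nat.find_spec h, fun hm => by simpa using Nat.find_min h hm⟩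

theorem exists_computable_lt_mem_of_unbounded {h : ℕ →. ℕ} (hh : Partrec h)
    (hunb : ∀ n, ∃ i, ∃ v ∈ h i, n < v) :
    ∃ σ : ℕ → ℕ, Computable σ ∧ ∀ n, ∃ v ∈ h (σ n), n < v := by
  obtain ⟨c, rfl⟩ := exists_code.1 (Partrec.nat_iff.1 hh)
  let P : ℕ → ℕ → Prop := fun n w => n < (evaln w.unpair.2 c w.unpair.1).getD 0
  have hP : ComputablePred fun p : ℕ × ℕ => P p.1 p.2 :=
    PrimrecPred.computablePred <| Primrec.nat_lt.comp Primrec.fst <|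
      Primrec.option_getD.comp (primrec_evaln.comp
        ((((Primrec.snd.comp Primrec.unpair).comp Primrec.snd).pair (Primrec.const c)).pair
          ((Primrec.fst.comp Primrec.unpair).comp Primrec.snd))) (Primrec.const 0)
  have hex : ∀ n, ∃ w, P n w := fun n => by
    obtain ⟨i, v, hv, hnv⟩ := hunb n
    obtain ⟨k, hk⟩ := evaln_complete.1 hv
    exact ⟨Nat.pair i k, by simp [P, Option.mem_def.1 hk, hnv]⟩
  refine ⟨fun n => (Nat.find (hex n)).unpair.1,
    (Primrec.fst.comp Primrec.unpair).to_comp.comp (Computable.find hP hex), fun n => ?_⟩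
  have hfound := Nat.find_spec (hex n)
  cases hs : evaln (Nat.find (hex n)).unpair.2 c (Nat.find (hex n)).unpair.1 with
  | none => simp [P, hs] at hfound
  | some v =>
    simp only [P, hs, Option.getD_some] at hfound
    exact ⟨v, evaln_sound hs, hfound⟩

namespace ComputablyBounded

variable {φ : ℕ → ℕ →. ℕ}

/-- By the recursion theorem, the numbering `ψ ⟨c, e⟩ := φ (F (eval c e) e)` has an index
`⟨c, e⟩` whose code `c` computes the bound that `hcb` provides for `ψ` itself. -/
theorem exists_fixed_bound (hφ : PartrecNumbering φ) (hcb : ComputablyBounded φ)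
    {F : ℕ → ℕ →. ℕ} (hF : Partrec₂ F) :
    ∃ B : ℕ → ℕ, Computable B ∧ ∀ e, ∀ d ∈ F (B e) e, minIndex φ d ≤ B e := by
  let ψ : ℕ → ℕ →. ℕ := fun p x =>
    (eval (Denumerable.ofNat Code p.unpair.1) p.unpair.2).bind fun b =>
      (F b p.unpair.2).bind fun d => φ d x
  have hψ : PartrecNumbering ψ := by
    have hunpair : Computable fun q : ℕ × ℕ => q.1.unpair :=
      (Primrec.unpair.comp Primrec.fst).to_comp
    have hinner : Partrec fun z : (ℕ × ℕ) × ℕ => (F z.2 z.1.1.unpair.2).bind fun d => φ d z.1.2 :=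
      (hF.comp Computable.snd ((Computable.snd.comp hunpair).comp Computable.fst)).bind
        (hφ.comp Computable.snd ((Computable.snd.comp Computable.fst).comp Computable.fst))
    exact (eval_part.comp ((Computable.ofNat Code).comp
      (Computable.fst.comp hunpair)) (Computable.snd.comp hunpair)).bind hinner.to₂
  obtain ⟨b, hb, hbψ⟩ := hcb ψ hψ
  have hself : Partrec₂ fun (c : Code) (e : ℕ) =>
      Part.some (b (Nat.pair (Encodable.encode c) e)) :=
    (hb.comp (Primrec₂.natPair.to_comp.comp (Computable.encode.comp Computable.fst)
      Computable.snd)).partrec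
  obtain ⟨c, hc⟩ := fixed_point₂ hself
  refine ⟨fun e => b (Nat.pair (Encodable.encode c) e),
    hb.comp (Primrec₂.natPair.to_comp.comp (Computable.const _) Computable.id), fun e d hd => ?_⟩
  have hψd : ψ (Nat.pair (Encodable.encode c) e) = φ d := by
    funext x
    simp [ψ, hc, Part.eq_some_iff.2 hd]
  obtain ⟨j, hj, hφj⟩ := hbψ (Nat.pair (Encodable.encode c) e)
  exact (minIndex_le_of_eq (hφj.trans hψd)).trans hj

theorem not_exists_computable_minimal (hφ : PartrecNumbering φ) (hcb : ComputablyBounded φ) :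
    ¬ ∃ g : ℕ → ℕ, Computable g ∧ (∀ n, minIndex φ (g n) = g n) ∧
      ∀ n, ∃ v ∈ φ (g n) 0, n < v := by
  rintro ⟨g, hg, hmin, hval⟩
  have hunb : ∀ N, ∃ n, N < g n := fun N => by
    obtain ⟨V, hV⟩ := exists_lt_minIndex_of_lt_value φ N
    obtain ⟨v, hv, hVv⟩ := hval V
    exact ⟨V, hmin V ▸ hV _ v hv hVv⟩
  have hsearch : Computable fun N => g (Nat.find (hunb N)) :=
    hg.comp (Computable.find (P := fun N n => N < g n) (Computable.computablePred
      (Primrec.nat_lt.decide.to_comp.comp Computable.fst (hg.comp Computable.snd))) hunb)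
  obtain ⟨B, -, hB⟩ := hcb.exists_fixed_bound hφ
    (F := fun N _ => Part.some (g (Nat.find (hunb N)))) (hsearch.comp Computable.fst).to₂.partrec₂
  have h := hB 0 _ (Part.mem_some _)
  rw [hmin] at h
  exact absurd (Nat.find_spec (hunb (B 0))) (not_lt.2 h)

end ComputablyBounded

structure MinCandidates (φ : ℕ → ℕ →. ℕ) (r : ℕ) (δ : ℕ → ℕ) (Λ : ℕ → Finset ℕ) : Prop where
  computable_index : Computable δ
  computable_mem : Computable₂ fun i x => decide (x ∈ Λ i)
  card_le : ∀ i, (Λ i).card ≤ r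
  minIndex_mem : ∀ i, minIndex φ (δ i) = δ i ∨ minIndex φ (δ i) ∈ Λ i
  large_value : ∀ n, ∃ v ∈ φ (δ n) 0, n < v

namespace MinCandidates

variable {φ : ℕ → ℕ →. ℕ} {r : ℕ} {δ : ℕ → ℕ} {Λ : ℕ → Finset ℕ}

theorem false_of_eventually_le (hφ : PartrecNumbering φ) (hcb : ComputablyBounded φ)
    (h : MinCandidates φ r δ Λ) {N e₀ : ℕ} (hle : ∀ i ≥ e₀, ∀ x ∈ Λ i, x ≤ N) : False := by
  obtain ⟨V, hV⟩ := exists_lt_minIndex_of_lt_value φ N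
  refine hcb.not_exists_computable_minimal hφ ⟨fun n => δ (n + max e₀ V),
    h.computable_index.comp (Primrec.nat_add.comp Primrec.id (Primrec.const _)).to_comp,
    fun n => ?_, fun n => ?_⟩
  · obtain ⟨v, hv, hlt⟩ := h.large_value (n + max e₀ V)
    have hN := hV _ v hv (by omega)
    exact (h.minIndex_mem _).resolve_right fun hm => absurd (hle _ (by omega) _ hm) (by omega)
  · obtain ⟨v, hv, hlt⟩ := h.large_value (n + max e₀ V)
    exact ⟨v, hv, by omega⟩

theorem restrict (h : MinCandidates φ (r + 1) δ Λ) {ι B : ℕ → ℕ} (hι : Computable ι)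
    (hB : Computable B) (hge : ∀ e, e ≤ ι e) (hbig : ∀ e, ∃ x ∈ Λ (ι e), B e < x)
    (hminB : ∀ e, minIndex φ (δ (ι e)) ≤ B e) :
    MinCandidates φ r (fun e => δ (ι e)) fun e => (Λ (ι e)).filter (· ≤ B e) where
  computable_index := h.computable_index.comp hι
  computable_mem :=
    (Primrec.and.to_comp.comp (h.computable_mem.comp (hι.comp Computable.fst) Computable.snd)
      (Primrec.nat_le.decide.to_comp.comp Computable.snd (hB.comp Computable.fst))).of_eq
      fun q => by simp
  card_le e := by
    obtain ⟨x, hx, hlt⟩ := hbig e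
    have hss : (Λ (ι e)).filter (· ≤ B e) ⊂ Λ (ι e) :=
      Finset.filter_ssubset.2 ⟨x, hx, not_le.2 hlt⟩
    have := h.card_le (ι e)
    have := Finset.card_lt_card hss
    omega
  minIndex_mem e := (h.minIndex_mem _).imp_right fun hm => Finset.mem_filter.2 ⟨hm, hminB e⟩
  large_value e := by
    obtain ⟨v, hv, hlt⟩ := h.large_value (ι e)
    exact ⟨v, hv, (hge e).trans_lt hlt⟩

theorem descend (hφ : PartrecNumbering φ) (hcb : ComputablyBounded φ)
    (h : MinCandidates φ (r + 1) δ Λ) : ∃ δ' Λ', MinCandidates φ r δ' Λ' := by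
  let P : ℕ → ℕ → ℕ → Prop := fun b e w =>
    e ≤ w.unpair.1 ∧ w.unpair.2 ∈ Λ w.unpair.1 ∧ b < w.unpair.2
  have hi : Computable fun w : ℕ => w.unpair.1 := (Primrec.fst.comp Primrec.unpair).to_comp
  have hx : Computable fun w : ℕ => w.unpair.2 := (Primrec.snd.comp Primrec.unpair).to_comp
  have hP : Computable fun q : (ℕ × ℕ) × ℕ => decide (P q.1.1 q.1.2 q.2) :=
    (Primrec.and.to_comp.comp
      (Primrec.nat_le.decide.to_comp.comp (Computable.snd.comp Computable.fst)
        (hi.comp Computable.snd))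
      (Primrec.and.to_comp.comp
        (h.computable_mem.comp (hi.comp Computable.snd) (hx.comp Computable.snd))
        (Primrec.nat_lt.decide.to_comp.comp (Computable.fst.comp Computable.fst)
          (hx.comp Computable.snd)))).of_eq fun q => by simp [P]
  obtain ⟨B, hB, hBmin⟩ := hcb.exists_fixed_bound hφ
    (F := fun b e => (Nat.rfind fun w => Part.some (decide (P b e w))).map fun w => δ w.unpair.1)
    ((Partrec.rfind hP.to₂.partrec₂).map
      ((h.computable_index.comp hi).comp Computable.snd).to₂).to₂
  by_cases hsearch : ∀ e, ∃ w, P (B e) e w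
  · have hw : Computable fun e => Nat.find (hsearch e) :=
      Computable.find (P := fun e w => P (B e) e w) (Computable.computablePred
        (hP.comp ((Computable.pair (hB.comp Computable.fst) Computable.fst).pair
          Computable.snd))) hsearch
    exact ⟨_, _, h.restrict (hi.comp hw) hB (fun e => (Nat.find_spec (hsearch e)).1)
      (fun e => ⟨_, (Nat.find_spec (hsearch e)).2⟩)
      fun e => hBmin e _ (Part.mem_map _ (Nat.find_mem_rfind (hsearch e)))⟩
  · simp only [not_forall, not_exists] at hsearch
    obtain ⟨e₀, he₀⟩ := hsearch
    exact (h.false_of_eventually_le hφ hcb (N := B e₀) (e₀ := e₀) fun i hi x hx =>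
      not_lt.1 fun hlt => he₀ (Nat.pair i x) (by simpa [P] using ⟨hi, hx, hlt⟩)).elim

end MinCandidates

theorem not_minCandidates {φ : ℕ → ℕ →. ℕ} (hφ : PartrecNumbering φ)
    (hcb : ComputablyBounded φ) (r : ℕ) : ∀ δ Λ, ¬ MinCandidates φ r δ Λ := by
  induction r with
  | zero =>
    intro δ Λ h
    exact h.false_of_eventually_le hφ hcb (N := 0) (e₀ := 0) fun i _ x hx =>
      absurd hx (by simp [Finset.card_eq_zero.1 (Nat.le_zero.1 (h.card_le i))])
  | succ r ih =>
    intro δ Λ h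
    obtain ⟨δ', Λ', h'⟩ := h.descend hφ hcb
    exact ih δ' Λ' h'

/-- Indices `e` with `e ∈ f e` (or the minimal index `0`), with candidate sets `f e \ {e}`. -/
theorem exists_minCandidates_of_shortlist {φ : ℕ → ℕ →. ℕ} (hφ : PartrecNumbering φ)
    (hcb : ComputablyBounded φ) {f : ℕ → Finset ℕ} {k : ℕ} (hf : Computable f)
    (hcard : ∀ e, (f e).card ≤ k) (hmin : ∀ e, minIndex φ e ∈ f e) :
    ∃ δ Λ, MinCandidates φ (k - 1) δ Λ := by
  have hmem : Computable₂ fun e x => decide (x ∈ f e) :=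
    primrecRel_mem_finset.decide.to_comp.comp Computable.snd (hf.comp Computable.fst)
  let δ₀ e := if e ∈ f e then e else 0
  have hδ₀ : Computable δ₀ :=
    (Computable.cond (hmem.comp Computable.id Computable.id) Computable.id
      (Computable.const 0)).of_eq fun e => by simp [δ₀, Bool.cond_decide]
  have hself e : δ₀ e ∈ f (δ₀ e) := by
    by_cases he : e ∈ f e
    · simp [δ₀, he]
    · simpa [δ₀, he, minIndex_zero] using hmin 0
  have hunb n : ∃ i, ∃ v ∈ φ (δ₀ i) 0, n < v := by
    obtain ⟨_, -, hconst⟩ := hcb (fun e _ => Part.some e)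
      (Computable.fst (α := ℕ) (β := ℕ)).partrec
    obtain ⟨j, -, hj⟩ := hconst (n + 1)
    have hδ₀j : δ₀ (minIndex φ j) = minIndex φ j := by
      simp [δ₀, minIndex_minIndex φ j ▸ hmin (minIndex φ j)]
    refine ⟨minIndex φ j, n + 1, ?_, Nat.lt_succ_self n⟩
    rw [hδ₀j, minIndex_spec φ j, hj]
    exact Part.mem_some _
  obtain ⟨σ, hσ, hσval⟩ := exists_computable_lt_mem_of_unbounded
    (hφ.comp hδ₀ (Computable.const 0)) hunb
  refine ⟨fun n => δ₀ (σ n), fun n => (f (δ₀ (σ n))).erase (δ₀ (σ n)),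
    ⟨hδ₀.comp hσ, ?_, fun n => ?_, fun n => ?_, hσval⟩⟩
  · exact (Primrec.and.to_comp.comp (Primrec.not.to_comp.comp (Primrec.eq.decide.to_comp.comp
      Computable.snd ((hδ₀.comp hσ).comp Computable.fst)))
      (hmem.comp ((hδ₀.comp hσ).comp Computable.fst) Computable.snd)).of_eq fun q => by simp
  · rw [Finset.card_erase_of_mem (hself _)]
    exact Nat.sub_le_sub_right (hcard _) 1
  · by_cases heq : minIndex φ (δ₀ (σ n)) = δ₀ (σ n)
    · exact Or.inl heq
    · exact Or.inr (Finset.mem_erase.2 ⟨heq, hmin _⟩)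

theorem no_constant_size_shortlist_general
    (φ : ℕ → ℕ →. ℕ) (hφ : PartrecNumbering φ) (hcb : ComputablyBounded φ)
    (k : ℕ) :
    ¬ ∃ f : ℕ → Finset ℕ, Computable f ∧ (∀ e, (f e).card ≤ k) ∧
        ∀ e, minIndex φ e ∈ f e := by
  rintro ⟨f, hf, hcard, hmin⟩
  obtain ⟨δ, Λ, h⟩ := exists_minCandidates_of_shortlist hφ hcb hf hcard hmin
  exact not_minCandidates hφ hcb _ δ Λ h

/-- For a computably bounded numbering, no computable function mapping each
index to a list of at most `k` candidates always captures `min_φ(e)`. -/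
theorem no_constant_size_shortlist
    (φ : ℕ → ℕ →. ℕ) (hφ : PartrecNumbering φ) (hcb : ComputablyBounded φ)
    (k : ℕ) (hk : 0 < k) :
    ¬ ∃ f : ℕ → Finset ℕ, Computable f ∧ (∀ e, (f e).card ≤ k) ∧
        ∀ e, minIndex φ e ∈ f e :=
  no_constant_size_shortlist_general φ hφ hcb k
end
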